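/- Let G be a DAG with distinguished vertices A ≠ Ŷ such that no vertex is a parent of A and every vertex other than A and Ŷ is a parent of Ŷ. If u ∈ X(P), w is a vertex with w ∉ {A, Ŷ}, and there is a directed edge u → w, then there exists an active path from A to Ŷ containing both u and w, on which u occurs before w. (The first case in the proof of Proposition 3.) -/

import Mathlib

/-!
Since `A` has no parents, an active path from `A` starts with an edge out of `A`, and an active
path cannot turn back after a forward edge without creating a collider; so every active path from
`A` is directed. Cut such a path after `u` and continue with `u → w → Yh` (every vertex other than
`A`, `Yh` is a parent of `Yh`). The result is directed, hence active, and it is a path because a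
directed walk in a DAG repeats no vertex.
-/

/-- A path in a directed graph `D`: a list of at least two pairwise distinct
vertices in which every two consecutive vertices `u, v` satisfy `D u v` or `D v u`. -/
def IsPath {V : Type*} (D : V → V → Prop) (p : List V) : Prop :=
  2 ≤ p.length ∧ p.Nodup ∧ p.Chain' (fun u v => D u v ∨ D v u)

/-- A path is active if no internal vertex on it is a collider. -/
def IsActive {V : Type*} (D : V → V → Prop) (p : List V) : Prop :=
  ∀ a b c : V, [a, b, c] <:+: p → ¬ (D a b ∧ D c b)

/-- An active path from `A` to `Yh`. -/
def IsActivePathFromTo {V : Type*} (D : V → V → Prop) (A Yh : V) (p : List V) : Prop :=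
  IsPath D p ∧ IsActive D p ∧ p.head? = some A ∧ p.getLast? = some Yh

/-- `u` occurs before `v` on the list `p`. -/
def OccursBefore {V : Type*} (p : List V) (u v : V) : Prop :=
  ∃ i j : Fin p.length, i < j ∧ p.get i = u ∧ p.get j = v

/-- `x ∈ X(P)`: `x` is a vertex other than `A` and `Yh` lying on some active
path from `A` to `Yh`. -/
def InXP {V : Type*} (D : V → V → Prop) (A Yh x : V) : Prop :=
  x ≠ A ∧ x ≠ Yh ∧ ∃ p : List V, IsActivePathFromTo D A Yh p ∧ x ∈ p

open List Relation

section

variable {V : Type*} {D : V → V → Prop}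

theorem List.IsChain.nodup_of_acyclic (hdag : Irreflexive (TransGen D)) {l : List V}
    (h : IsChain D l) : l.Nodup := by
  refine (h.imp fun _ _ => TransGen.single).pairwise.imp ?_
  rintro x _ hxx rfl
  exact hdag x hxx

theorem List.IsChain.isPath (hdag : Irreflexive (TransGen D)) {l : List V}
    (hlen : 2 ≤ l.length) (h : IsChain D l) : IsPath D l :=
  ⟨hlen, h.nodup_of_acyclic hdag, h.imp fun _ _ => Or.inl⟩

theorem List.IsChain.isActive (hasym : ∀ u v, D u v → ¬ D v u) {l : List V}
    (h : IsChain D l) : IsActive D l := fun _ b c hinf ⟨_, hcb⟩ =>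
  hasym b c (isChain_cons_cons.mp (isChain_cons_cons.mp (h.infix hinf)).2).1 hcb

theorem IsActive.tail {a : V} {l : List V} (h : IsActive D (a :: l)) : IsActive D l :=
  fun x y z hinf => h x y z (hinf.trans (suffix_cons a l).isInfix)

theorem IsActive.isChain_of_rel {a b : V} {l : List V} (hact : IsActive D (a :: b :: l))
    (hch : IsChain (fun u v => D u v ∨ D v u) (a :: b :: l)) (hab : D a b) :
    IsChain D (a :: b :: l) := by
  induction l generalizing a b with
  | nil => exact isChain_pair.mpr hab
  | cons c l ih =>
    have hbc : D b c := (isChain_cons_cons.mp (isChain_cons_cons.mp hch).2).1.resolve_right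
      fun hcb => hact a b c ⟨[], l, rfl⟩ ⟨hab, hcb⟩
    exact isChain_cons_cons.mpr ⟨hab, ih hact.tail (isChain_cons_cons.mp hch).2 hbc⟩

theorem IsActivePathFromTo.isChain_of_forall_not_rel {A Yh : V} {p : List V}
    (hp : IsActivePathFromTo D A Yh p) (hA : ∀ x, ¬ D x A) : IsChain D p := by
  obtain ⟨⟨hlen, -, hch⟩, hact, hhead, -⟩ := hp
  obtain _ | ⟨a, _ | ⟨b, l⟩⟩ := p
  · simp at hlen
  · simp at hlen
  obtain rfl : a = A := by simpa using hhead
  exact hact.isChain_of_rel hch ((isChain_cons_cons.mp hch).1.resolve_right (hA b))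

theorem occursBefore_append_cons_cons (l t : List V) (a b : V) :
    OccursBefore (l ++ a :: b :: t) a b :=
  ⟨⟨l.length, by simp⟩, ⟨l.length + 1, by simp⟩, by simp, by simp, by simp⟩

end

theorem exists_active_path_through_edge_general
    {V : Type*} (D : V → V → Prop)
    (hasym : ∀ u v, D u v → ¬ D v u)
    (hdag : Irreflexive (Relation.TransGen D))
    (A Yh : V)
    (hA : ∀ w, ¬ D w A)
    (hY : ∀ w, w ≠ A → w ≠ Yh → D w Yh)
    (u w : V) (hu : InXP D A Yh u)
    (hwA : w ≠ A) (hwY : w ≠ Yh)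
    (huw : D u w) :
    ∃ p : List V, IsActivePathFromTo D A Yh p ∧ u ∈ p ∧ w ∈ p ∧
      OccursBefore p u w := by
  obtain ⟨-, -, p, hp, hup⟩ := hu
  obtain ⟨l, l', rfl⟩ := append_of_mem hup
  have hpre : IsChain D (l ++ [u]) :=
    (hp.isChain_of_forall_not_rel hA).prefix ⟨l', by simp⟩
  have hq : IsChain D (l ++ [u, w, Yh]) := by
    simp [hpre, huw, hY w hwA hwY]
  refine ⟨l ++ [u, w, Yh], ⟨hq.isPath hdag (by simp), hq.isActive hasym, ?_, by simp⟩,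
    by simp, by simp, occursBefore_append_cons_cons l [Yh] u w⟩
  simpa [head?_append] using hp.2.2.1

/-- First case in the proof of Proposition 3: in a DAG with no parent of `A`
and where every vertex other than `A` and `Yh` is a parent of `Yh`, if
`u ∈ X(P)`, `w ∉ {A, Yh}` and there is a directed edge `u → w`, then there is
an active path from `A` to `Yh` containing both `u` and `w` on which `u`
occurs before `w`. -/
theorem exists_active_path_through_edge
    {V : Type*} [Fintype V] (D : V → V → Prop)
    (hirr : Irreflexive D) (hasym : ∀ u v, D u v → ¬ D v u)
    (hdag : Irreflexive (Relation.TransGen D))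
    (A Yh : V) (hAY : A ≠ Yh)
    (hA : ∀ w, ¬ D w A)
    (hY : ∀ w, w ≠ A → w ≠ Yh → D w Yh)
    (u w : V) (hu : InXP D A Yh u)
    (hwA : w ≠ A) (hwY : w ≠ Yh)
    (huw : D u w) :
    ∃ p : List V, IsActivePathFromTo D A Yh p ∧ u ∈ p ∧ w ∈ p ∧
      OccursBefore p u w :=
  exists_active_path_through_edge_general D hasym hdag A Yh hA hY u w hu hwA hwY huw
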